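/- arXiv:2509.08293 — 2 statements merged into one kernel-verified Lean document; each statement's English description precedes it below -/
import Mathlib

section
/- Let 1 ≤ p, q, r ≤ ∞ with 1/p = 1/q + 1/r. If T : E₁ × ⋯ × E_m → F is a positive weakly (q,r)-dominated m-linear operator, u_j : G_j → E_j are positive bounded linear operators (1 ≤ j ≤ m), and v : F → H is a positive bounded linear operator, then v ∘ T ∘ (u₁, ..., u_m) is positive weakly (q,r)-dominated and d⁺(v ∘ T ∘ (u₁,...,u_m)) ≤ d⁺(T) · ‖u₁‖ ⋯ ‖u_m‖ · ‖v‖. -/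
open scoped BigOperators

section

/-- A functional on a Banach lattice is positive if it is nonnegative on the positive cone. -/
def IsPosFunc {F : Type*} [NormedAddCommGroup F] [Lattice F] [HasSolidNorm F]
    [IsOrderedAddMonoid F] [NormedSpace ℝ F]
    (f : F →L[ℝ] ℝ) : Prop := ∀ y : F, 0 ≤ y → 0 ≤ f y

/-- A continuous `m`-linear form is positive if it is nonnegative on positive tuples. -/
def IsPosForm {m : ℕ} {E : Fin m → Type*} [∀ i, NormedAddCommGroup (E i)] [∀ i, Lattice (E i)] [∀ i, HasSolidNorm (E i)]
    [∀ i, IsOrderedAddMonoid (E i)]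
    [∀ i, NormedSpace ℝ (E i)] (φ : ContinuousMultilinearMap ℝ E ℝ) : Prop :=
  ∀ x : ∀ i, E i, (∀ i, 0 ≤ x i) → 0 ≤ φ x

/-- `sup_{φ ∈ B⁺_{L^r(E₁,…,E_m)}} (∑ᵢ φ(x_i^1,…,x_i^m)^q)^{1/q}`. -/
noncomputable def posFormBallSup {m : ℕ} {E : Fin m → Type*}
    [∀ i, NormedAddCommGroup (E i)] [∀ i, Lattice (E i)] [∀ i, HasSolidNorm (E i)]
    [∀ i, IsOrderedAddMonoid (E i)] [∀ i, NormedSpace ℝ (E i)]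
    (q : ℝ) {n : ℕ} (x : Fin n → ∀ j, E j) : ℝ :=
  ⨆ φ : {φ : ContinuousMultilinearMap ℝ E ℝ // ‖φ‖ ≤ 1 ∧ IsPosForm φ},
    (∑ i, (φ.1 (x i)) ^ q) ^ (1 / q)

/-- `sup_{y** ∈ B⁺_{F**}} (∑ᵢ ⟨y_i*, y**⟩^r)^{1/r}`. -/
noncomputable def posBidualBallSup {F : Type*} [NormedAddCommGroup F] [Lattice F] [HasSolidNorm F]
    [IsOrderedAddMonoid F]
    [NormedSpace ℝ F] (r : ℝ) {n : ℕ} (y : Fin n → F →L[ℝ] ℝ) : ℝ :=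
  ⨆ Φ : {Φ : (F →L[ℝ] ℝ) →L[ℝ] ℝ // ‖Φ‖ ≤ 1 ∧ ∀ g, IsPosFunc g → 0 ≤ Φ g},
    (∑ i, (Φ.1 (y i)) ^ r) ^ (1 / r)

/-- `T` is positive weakly `(q,r)`-dominated with constant `C`. -/
def PWDC {m : ℕ} {E : Fin m → Type*} [∀ i, NormedAddCommGroup (E i)] [∀ i, Lattice (E i)] [∀ i, HasSolidNorm (E i)]
    [∀ i, IsOrderedAddMonoid (E i)]
    [∀ i, NormedSpace ℝ (E i)] {F : Type*} [NormedAddCommGroup F] [Lattice F] [HasSolidNorm F]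
    [IsOrderedAddMonoid F] [NormedSpace ℝ F]
    (p q r : ℝ) (T : ContinuousMultilinearMap ℝ E F) (C : ℝ) : Prop :=
  ∀ (n : ℕ) (x : Fin n → ∀ j, E j) (y : Fin n → F →L[ℝ] ℝ),
    (∀ i j, 0 ≤ x i j) → (∀ i, IsPosFunc (y i)) →
    (∑ i, ((y i) (T (x i))) ^ p) ^ (1 / p) ≤
      C * posFormBallSup q x * posBidualBallSup r y

/-- `d⁺(T)`, the infimum of admissible constants. -/
noncomputable def dplus {m : ℕ} {E : Fin m → Type*} [∀ i, NormedAddCommGroup (E i)] [∀ i, Lattice (E i)] [∀ i, HasSolidNorm (E i)]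
    [∀ i, IsOrderedAddMonoid (E i)]
    [∀ i, NormedSpace ℝ (E i)] {F : Type*} [NormedAddCommGroup F] [Lattice F] [HasSolidNorm F]
    [IsOrderedAddMonoid F] [NormedSpace ℝ F]
    (p q r : ℝ) (T : ContinuousMultilinearMap ℝ E F) : ℝ :=
  sInf {C : ℝ | 0 ≤ C ∧ PWDC p q r T C}

/-!
Both suprema in the definition of `PWDC` range over the positive part of the unit ball of a
space of functionals. Precomposing with the positive maps `u j` (resp. with the transpose of `v`)
keeps functionals positive and multiplies their norm by at most `∏ j, ‖u j‖` (resp. `‖v‖`);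
rescaling back into the unit ball bounds each supremum for `(u x, y ∘ v)` by that factor times
the supremum for `(x, y)`. So every admissible constant `C` for `T` gives the admissible constant
`C * ∏ j, ‖u j‖ * ‖v‖` for `v ∘ T ∘ (u₁, …, u_m)`, and passing to infima bounds `d⁺`.
-/

/-- `posFormBallSup` and `posBidualBallSup` are the cases where `e i` is evaluation at the
`i`-th point. -/
noncomputable def posBallSup {V : Type*} [NormedAddCommGroup V] (P : V → Prop) (q : ℝ) {n : ℕ}
    (e : Fin n → V → ℝ) : ℝ :=
  ⨆ φ : {φ : V // ‖φ‖ ≤ 1 ∧ P φ}, (∑ i, (e i φ.1) ^ q) ^ (1 / q)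

theorem Real.sum_const_mul_rpow_rpow_one_div {ι : Type*} (s : Finset ι) {c q : ℝ} (hc : 0 ≤ c)
    (hq : q ≠ 0) {f : ι → ℝ} (hf : ∀ i ∈ s, 0 ≤ f i) :
    (∑ i ∈ s, (c * f i) ^ q) ^ (1 / q) = c * (∑ i ∈ s, f i ^ q) ^ (1 / q) := by
  rw [Finset.sum_congr rfl fun i hi => Real.mul_rpow hc (hf i hi), ← Finset.mul_sum,
    Real.mul_rpow (Real.rpow_nonneg hc q)
      (Finset.sum_nonneg fun i hi => Real.rpow_nonneg (hf i hi) q),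
    ← Real.rpow_mul hc, mul_one_div_cancel hq, Real.rpow_one]

theorem ContinuousLinearMap.isBoundedLinearMap_apply {𝕜 E F : Type*}
    [NontriviallyNormedField 𝕜] [NormedAddCommGroup E] [NormedSpace 𝕜 E]
    [NormedAddCommGroup F] [NormedSpace 𝕜 F] (x : E) :
    IsBoundedLinearMap 𝕜 fun f : E →L[𝕜] F => f x :=
  IsLinearMap.with_bound ⟨fun _ _ => rfl, fun _ _ => rfl⟩ ‖x‖ fun f =>
    (f.le_opNorm x).trans_eq (mul_comm _ _)

section posBallSup

variable {V W : Type*} [NormedAddCommGroup V] [NormedAddCommGroup W]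
  {P : V → Prop} {q : ℝ} {n : ℕ} {e : Fin n → V → ℝ}

theorem posBallSup_nonneg (he_nonneg : ∀ φ, P φ → ∀ i, 0 ≤ e i φ) : 0 ≤ posBallSup P q e :=
  Real.iSup_nonneg fun φ => Real.rpow_nonneg
    (Finset.sum_nonneg fun i _ => Real.rpow_nonneg (he_nonneg _ φ.2.2 i) q) _

variable [NormedSpace ℝ V]

theorem bddAbove_posBallSup (he : ∀ i, IsBoundedLinearMap ℝ (e i))
    (he_nonneg : ∀ φ, P φ → ∀ i, 0 ≤ e i φ) (hq : 0 < q) :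
    BddAbove (Set.range fun φ : {φ : V // ‖φ‖ ≤ 1 ∧ P φ} =>
      (∑ i, (e i φ.1) ^ q) ^ (1 / q)) := by
  choose M hM0 hM using fun i => (he i).bound
  refine ⟨(∑ i, M i ^ q) ^ (1 / q), ?_⟩
  rintro _ ⟨φ, rfl⟩
  have hle : ∀ i, e i φ.1 ≤ M i := fun i =>
    calc e i φ.1 ≤ ‖e i φ.1‖ := le_abs_self _
      _ ≤ M i * ‖φ.1‖ := hM i _
      _ ≤ M i := mul_le_of_le_one_right (hM0 i).le φ.2.1
  exact Real.rpow_le_rpow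
    (Finset.sum_nonneg fun i _ => Real.rpow_nonneg (he_nonneg _ φ.2.2 i) q)
    (Finset.sum_le_sum fun i _ => Real.rpow_le_rpow (he_nonneg _ φ.2.2 i) (hle i) hq.le)
    (by positivity)

theorem le_norm_mul_posBallSup (hP : ∀ (c : ℝ) φ, 0 ≤ c → P φ → P (c • φ))
    (he : ∀ i, IsBoundedLinearMap ℝ (e i)) (he_nonneg : ∀ φ, P φ → ∀ i, 0 ≤ e i φ)
    (hq : 0 < q) {ψ : V} (hψ : P ψ) :
    (∑ i, (e i ψ) ^ q) ^ (1 / q) ≤ ‖ψ‖ * posBallSup P q e := by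
  set φ := ‖ψ‖⁻¹ • ψ
  have hφ : ‖φ‖ ≤ 1 ∧ P φ := by
    refine ⟨?_, hP _ _ (inv_nonneg.2 (norm_nonneg ψ)) hψ⟩
    rw [norm_smul, norm_inv, norm_norm]
    exact inv_mul_le_one_of_le₀ le_rfl (norm_nonneg ψ)
  have hψφ : ∀ i, e i ψ = ‖ψ‖ * e i φ := fun i => by
    rw [← smul_eq_mul, ← (he i).map_smul]
    rcases eq_or_ne ψ 0 with rfl | hψ0
    · simp
    · rw [smul_inv_smul₀ (norm_ne_zero_iff.2 hψ0)]
  calc (∑ i, (e i ψ) ^ q) ^ (1 / q) = ‖ψ‖ * (∑ i, (e i φ) ^ q) ^ (1 / q) := by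
        simp only [hψφ]
        exact Real.sum_const_mul_rpow_rpow_one_div _ (norm_nonneg ψ) hq.ne'
          fun i _ => he_nonneg _ hφ.2 i
    _ ≤ ‖ψ‖ * posBallSup P q e :=
        mul_le_mul_of_nonneg_left (le_ciSup (bddAbove_posBallSup he he_nonneg hq) ⟨φ, hφ⟩)
          (norm_nonneg ψ)

theorem posBallSup_comp_le (hP : ∀ (c : ℝ) φ, 0 ≤ c → P φ → P (c • φ))
    (he : ∀ i, IsBoundedLinearMap ℝ (e i)) (he_nonneg : ∀ φ, P φ → ∀ i, 0 ≤ e i φ)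
    (hq : 0 < q) {P' : W → Prop} {A : W → V} {K : ℝ} (hK : 0 ≤ K)
    (hA : ∀ φ, ‖A φ‖ ≤ K * ‖φ‖) (hAP : ∀ φ, P' φ → P (A φ)) :
    posBallSup P' q (fun i φ => e i (A φ)) ≤ K * posBallSup P q e := by
  refine Real.iSup_le (fun φ => ?_) (mul_nonneg hK (posBallSup_nonneg he_nonneg))
  calc (∑ i, (e i (A φ.1)) ^ q) ^ (1 / q) ≤ ‖A φ.1‖ * posBallSup P q e :=
        le_norm_mul_posBallSup hP he he_nonneg hq (hAP _ φ.2.2)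
    _ ≤ K * posBallSup P q e :=
        mul_le_mul_of_nonneg_right ((hA _).trans (mul_le_of_le_one_right hK φ.2.1))
          (posBallSup_nonneg he_nonneg)

end posBallSup

section BanachLattice

variable {m : ℕ} {E G : Fin m → Type*}
  [∀ i, NormedAddCommGroup (E i)] [∀ i, Lattice (E i)] [∀ i, HasSolidNorm (E i)]
  [∀ i, IsOrderedAddMonoid (E i)] [∀ i, NormedSpace ℝ (E i)]
  [∀ i, NormedAddCommGroup (G i)] [∀ i, Lattice (G i)] [∀ i, HasSolidNorm (G i)]
  [∀ i, IsOrderedAddMonoid (G i)] [∀ i, NormedSpace ℝ (G i)]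
  {F H : Type*} [NormedAddCommGroup F] [Lattice F] [HasSolidNorm F]
  [IsOrderedAddMonoid F] [NormedSpace ℝ F]
  [NormedAddCommGroup H] [Lattice H] [HasSolidNorm H]
  [IsOrderedAddMonoid H] [NormedSpace ℝ H]

theorem IsPosForm.smul {φ : ContinuousMultilinearMap ℝ E ℝ} (hφ : IsPosForm φ) {c : ℝ}
    (hc : 0 ≤ c) : IsPosForm (c • φ) :=
  fun x hx => mul_nonneg hc (hφ x hx)

theorem IsPosForm.compContinuousLinearMap {φ : ContinuousMultilinearMap ℝ E ℝ}
    (hφ : IsPosForm φ) {u : ∀ j, G j →L[ℝ] E j} (hu : ∀ j (z : G j), 0 ≤ z → 0 ≤ u j z) :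
    IsPosForm (φ.compContinuousLinearMap u) :=
  fun _ hx => hφ _ fun j => hu j _ (hx j)

theorem IsPosFunc.comp {g : H →L[ℝ] ℝ} (hg : IsPosFunc g) {v : F →L[ℝ] H}
    (hv : ∀ z : F, 0 ≤ z → 0 ≤ v z) : IsPosFunc (g.comp v) :=
  fun z hz => hg _ (hv z hz)

theorem posFormBallSup_nonneg (q : ℝ) {n : ℕ} {x : Fin n → ∀ j, E j}
    (hx : ∀ i j, 0 ≤ x i j) : 0 ≤ posFormBallSup q x :=
  posBallSup_nonneg (P := IsPosForm) (e := fun i φ => φ (x i)) fun _ hφ i => hφ _ (hx i)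

theorem posBidualBallSup_nonneg (r : ℝ) {n : ℕ} {y : Fin n → F →L[ℝ] ℝ}
    (hy : ∀ i, IsPosFunc (y i)) : 0 ≤ posBidualBallSup r y :=
  posBallSup_nonneg (P := fun Φ : (F →L[ℝ] ℝ) →L[ℝ] ℝ => ∀ g, IsPosFunc g → 0 ≤ Φ g)
    (e := fun i Φ => Φ (y i)) fun _ hΦ i => hΦ _ (hy i)

theorem posFormBallSup_comp_le {q : ℝ} (hq : 0 < q) {n : ℕ} {x : Fin n → ∀ j, G j}
    (hx : ∀ i j, 0 ≤ x i j) {u : ∀ j, G j →L[ℝ] E j}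
    (hu : ∀ j (z : G j), 0 ≤ z → 0 ≤ u j z) :
    posFormBallSup q (fun i j => u j (x i j)) ≤ (∏ j, ‖u j‖) * posFormBallSup q x :=
  posBallSup_comp_le (P := IsPosForm) (e := fun i φ => φ (x i)) (P' := IsPosForm)
    (A := fun φ : ContinuousMultilinearMap ℝ E ℝ => φ.compContinuousLinearMap u)
    (fun _ _ hc hφ => hφ.smul hc)
    (fun i => (ContinuousMultilinearMap.apply ℝ G ℝ (x i)).isBoundedLinearMap)
    (fun _ hφ i => hφ _ (hx i)) hq (by positivity)
    (fun φ => (φ.norm_compContinuousLinearMap_le u).trans_eq (mul_comm _ _))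
    fun _ hφ => hφ.compContinuousLinearMap hu

theorem posBidualBallSup_comp_le {r : ℝ} (hr : 0 < r) {n : ℕ} {y : Fin n → H →L[ℝ] ℝ}
    (hy : ∀ i, IsPosFunc (y i)) {v : F →L[ℝ] H} (hv : ∀ z : F, 0 ≤ z → 0 ≤ v z) :
    posBidualBallSup r (fun i => (y i).comp v) ≤ ‖v‖ * posBidualBallSup r y := by
  let vt : (H →L[ℝ] ℝ) →L[ℝ] F →L[ℝ] ℝ := ContinuousLinearMap.precomp ℝ v
  have hvt : ‖vt‖ ≤ ‖v‖ :=
    ContinuousLinearMap.opNorm_le_bound _ (norm_nonneg v) fun g =>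
      (g.opNorm_comp_le v).trans_eq (mul_comm _ _)
  exact posBallSup_comp_le (P := fun Φ : (H →L[ℝ] ℝ) →L[ℝ] ℝ => ∀ g, IsPosFunc g → 0 ≤ Φ g)
    (e := fun i Φ => Φ (y i)) (A := fun Φ : (F →L[ℝ] ℝ) →L[ℝ] ℝ => Φ.comp vt)
    (fun _ _ hc hΦ g hg => mul_nonneg hc (hΦ g hg))
    (fun i => ContinuousLinearMap.isBoundedLinearMap_apply (y i))
    (fun _ hΦ i => hΦ _ (hy i)) hr (norm_nonneg v)
    (fun Φ => (Φ.opNorm_comp_le vt).trans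
      ((mul_le_mul_of_nonneg_left hvt (norm_nonneg Φ)).trans_eq (mul_comm _ _)))
    fun _ hΦ g hg => hΦ _ (hg.comp hv)

theorem PWDC.comp {p q r : ℝ} (hq : 0 < q) (hr : 0 < r) {T : ContinuousMultilinearMap ℝ E F}
    {C : ℝ} (hC0 : 0 ≤ C) (hC : PWDC p q r T C)
    {u : ∀ j, G j →L[ℝ] E j} (hu : ∀ j (z : G j), 0 ≤ z → 0 ≤ u j z)
    {v : F →L[ℝ] H} (hv : ∀ z : F, 0 ≤ z → 0 ≤ v z) :
    PWDC p q r ((v.compContinuousMultilinearMap T).compContinuousLinearMap u)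
      (C * ((∏ j, ‖u j‖) * ‖v‖)) := by
  intro n x y hx hy
  have hux : ∀ i j, 0 ≤ u j (x i j) := fun i j => hu j _ (hx i j)
  have hyv : ∀ i, IsPosFunc ((y i).comp v) := fun i => (hy i).comp hv
  calc (∑ i, (y i ((v.compContinuousMultilinearMap T).compContinuousLinearMap u (x i))) ^ p)
        ^ (1 / p)
      = (∑ i, ((y i).comp v (T fun j => u j (x i j))) ^ p) ^ (1 / p) := rfl
    _ ≤ C * posFormBallSup q (fun i j => u j (x i j))
          * posBidualBallSup r (fun i => (y i).comp v) :=
        hC n _ _ hux hyv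
    _ ≤ C * ((∏ j, ‖u j‖) * posFormBallSup q x) * (‖v‖ * posBidualBallSup r y) := by
        refine mul_le_mul ?_ (posBidualBallSup_comp_le hr hy hv)
          (posBidualBallSup_nonneg r hyv) (by positivity [posFormBallSup_nonneg q hx])
        exact mul_le_mul_of_nonneg_left (posFormBallSup_comp_le hq hx hu) hC0
    _ = C * ((∏ j, ‖u j‖) * ‖v‖) * posFormBallSup q x * posBidualBallSup r y := by ring

theorem dplus_le_dplus_mul {p q r : ℝ} {T : ContinuousMultilinearMap ℝ E F}
    {S : ContinuousMultilinearMap ℝ G H} {k : ℝ} (hk : 0 ≤ k)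
    (hT : ∃ C, 0 ≤ C ∧ PWDC p q r T C)
    (h : ∀ C, 0 ≤ C → PWDC p q r T C → PWDC p q r S (C * k)) :
    dplus p q r S ≤ dplus p q r T * k := by
  rw [dplus, dplus, mul_comm, ← smul_eq_mul, ← Real.sInf_smul_of_nonneg hk]
  refine csInf_le_csInf ⟨0, fun _ hC => hC.1⟩ (Set.Nonempty.smul_set hT) ?_
  rintro _ ⟨C, ⟨hC0, hC⟩, rfl⟩
  show 0 ≤ k * C ∧ PWDC p q r S (k * C)
  rw [mul_comm k]
  exact ⟨mul_nonneg hC0 hk, h C hC0 hC⟩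

end BanachLattice

theorem pwd_comp_general {m : ℕ} {E G : Fin m → Type*}
    [∀ i, NormedAddCommGroup (E i)] [∀ i, Lattice (E i)] [∀ i, HasSolidNorm (E i)]
    [∀ i, IsOrderedAddMonoid (E i)] [∀ i, NormedSpace ℝ (E i)]
    [∀ i, NormedAddCommGroup (G i)] [∀ i, Lattice (G i)] [∀ i, HasSolidNorm (G i)]
    [∀ i, IsOrderedAddMonoid (G i)] [∀ i, NormedSpace ℝ (G i)]
    {F H : Type*} [NormedAddCommGroup F] [Lattice F] [HasSolidNorm F]
    [IsOrderedAddMonoid F] [NormedSpace ℝ F]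
    [NormedAddCommGroup H] [Lattice H] [HasSolidNorm H]
    [IsOrderedAddMonoid H] [NormedSpace ℝ H]
    (p q r : ℝ) (hq : 1 ≤ q) (hr : 1 ≤ r)
    (T : ContinuousMultilinearMap ℝ E F)
    (hT : ∃ C, 0 ≤ C ∧ PWDC p q r T C)
    (u : ∀ j, G j →L[ℝ] E j) (hu : ∀ j (z : G j), 0 ≤ z → 0 ≤ u j z)
    (v : F →L[ℝ] H) (hv : ∀ z : F, 0 ≤ z → 0 ≤ v z) :
    (∃ C, 0 ≤ C ∧
        PWDC p q r ((v.compContinuousMultilinearMap T).compContinuousLinearMap u) C) ∧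
      dplus p q r ((v.compContinuousMultilinearMap T).compContinuousLinearMap u) ≤
        dplus p q r T * (∏ j, ‖u j‖) * ‖v‖ := by
  obtain ⟨C, hC0, hC⟩ := hT
  have hcomp := fun C (hC0 : 0 ≤ C) (hC : PWDC p q r T C) =>
    PWDC.comp (one_pos.trans_le hq) (one_pos.trans_le hr) hC0 hC hu hv
  refine ⟨⟨_, by positivity, hcomp C hC0 hC⟩, ?_⟩
  rw [mul_assoc]
  exact dplus_le_dplus_mul (by positivity) ⟨C, hC0, hC⟩ hcomp

/-- Ideal property: composing a positive weakly `(q,r)`-dominated operator with positive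
linear operators `u_j` and `v` stays in the class, with
`d⁺(v ∘ T ∘ (u₁,…,u_m)) ≤ d⁺(T)·‖u₁‖⋯‖u_m‖·‖v‖`. -/
theorem pwd_comp {m : ℕ} {E G : Fin m → Type*}
    [∀ i, NormedAddCommGroup (E i)] [∀ i, Lattice (E i)] [∀ i, HasSolidNorm (E i)]
    [∀ i, IsOrderedAddMonoid (E i)] [∀ i, NormedSpace ℝ (E i)]
    [∀ i, CompleteSpace (E i)]
    [∀ i, NormedAddCommGroup (G i)] [∀ i, Lattice (G i)] [∀ i, HasSolidNorm (G i)]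
    [∀ i, IsOrderedAddMonoid (G i)] [∀ i, NormedSpace ℝ (G i)]
    [∀ i, CompleteSpace (G i)]
    {F H : Type*} [NormedAddCommGroup F] [Lattice F] [HasSolidNorm F]
    [IsOrderedAddMonoid F] [NormedSpace ℝ F] [CompleteSpace F]
    [NormedAddCommGroup H] [Lattice H] [HasSolidNorm H]
    [IsOrderedAddMonoid H] [NormedSpace ℝ H] [CompleteSpace H]
    (p q r : ℝ) (hp : 1 ≤ p) (hq : 1 ≤ q) (hr : 1 ≤ r) (hpqr : 1 / p = 1 / q + 1 / r)
    (T : ContinuousMultilinearMap ℝ E F)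
    (hT : ∃ C, 0 ≤ C ∧ PWDC p q r T C)
    (u : ∀ j, G j →L[ℝ] E j) (hu : ∀ j (z : G j), 0 ≤ z → 0 ≤ u j z)
    (v : F →L[ℝ] H) (hv : ∀ z : F, 0 ≤ z → 0 ≤ v z) :
    (∃ C, 0 ≤ C ∧
        PWDC p q r ((v.compContinuousMultilinearMap T).compContinuousLinearMap u) C) ∧
      dplus p q r ((v.compContinuousMultilinearMap T).compContinuousLinearMap u) ≤
        dplus p q r T * (∏ j, ‖u j‖) * ‖v‖ :=
  pwd_comp_general p q r hq hr T hT u hu v hv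
end
end

section
/- Let E₁, ..., E_m, F be Banach lattices and u = Σ_{i=1}^n λ_i x_i^1 ⊗ ⋯ ⊗ x_i^m ⊗ y_i ∈ E₁ ⊗ ⋯ ⊗ E_m ⊗ F. Then u = 0 if and only if Σ_i λ_i φ(x_i^1, ..., x_i^m) y*(y_i) = 0 for every positive m-linear form φ on E₁ × ⋯ × E_m and every positive functional y* ∈ (F*)⁺. -/
/-!
By Riesz–Kantorovich every continuous functional on a normed lattice is a difference of positive
ones: on the positive cone `f⁺(a) = sup f[0, a]` is additive and bounded, hence extends to a
continuous functional. By multilinearity the hypothesis therefore holds for all continuous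
functionals `f₁, …, f_m, g`. Continuous functionals separate points, so replacing them one
coordinate at a time by arbitrary linear functionals keeps the sum zero. Finally, the coordinate
functionals of the basis of `(⨂ⱼ Eⱼ) ⊗ F` formed by elementary tensors of basis vectors are
products of such functionals, so every coordinate of `u` vanishes.
-/

open scoped TensorProduct
open PiTensorProduct

section LatticeOrderedGroup

variable {G : Type*} [AddCommGroup G] [Lattice G] [IsOrderedAddMonoid G]

theorem map_posPart_sub_map_negPart_add {P : G → ℝ}
    (hP : ∀ a b, 0 ≤ a → 0 ≤ b → P (a + b) = P a + P b) (z w : G) :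
    P (z + w)⁺ - P (z + w)⁻ = (P z⁺ - P z⁻) + (P w⁺ - P w⁻) := by
  have hdecomp : (z + w)⁺ + (z⁻ + w⁻) = (z⁺ + w⁺) + (z + w)⁻ := by
    rw [← sub_eq_sub_iff_add_eq_add, posPart_sub_negPart]
    nth_rw 1 [← posPart_sub_negPart z, ← posPart_sub_negPart w]
    abel
  have h := congrArg P hdecomp
  rw [hP _ _ (posPart_nonneg _) (add_nonneg (negPart_nonneg z) (negPart_nonneg w)),
    hP _ _ (add_nonneg (posPart_nonneg z) (posPart_nonneg w)) (negPart_nonneg _),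
    hP _ _ (negPart_nonneg z) (negPart_nonneg w),
    hP _ _ (posPart_nonneg z) (posPart_nonneg w)] at h
  linarith

end LatticeOrderedGroup

section NormedLattice

variable {G : Type*} [NormedAddCommGroup G] [Lattice G] [IsOrderedAddMonoid G] [HasSolidNorm G]
  [NormedSpace ℝ G]

theorem exists_continuousLinearMap_eq_on_nonneg {P : G → ℝ} {C : ℝ} (hC : 0 ≤ C)
    (hP : ∀ a b, 0 ≤ a → 0 ≤ b → P (a + b) = P a + P b)
    (hPC : ∀ a, 0 ≤ a → |P a| ≤ C * ‖a‖) :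
    ∃ p : G →L[ℝ] ℝ, ∀ a, 0 ≤ a → p a = P a := by
  have hP0 : P 0 = 0 := by simpa using hP 0 0 le_rfl le_rfl
  let p : G →+ ℝ := AddMonoidHom.mk' (fun z => P z⁺ - P z⁻) (map_posPart_sub_map_negPart_add hP)
  have hpC : ∀ z, ‖p z‖ ≤ 2 * C * ‖z‖ := by
    intro z
    have hpos : ‖z⁺‖ ≤ ‖z‖ := by simpa using lipschitzWith_posPart.dist_le_mul z 0
    have hneg : ‖z⁻‖ ≤ ‖z‖ := by simpa using lipschitzWith_negPart.dist_le_mul z 0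
    calc ‖p z‖ = |P z⁺ - P z⁻| := rfl
      _ ≤ |P z⁺| + |P z⁻| := abs_sub _ _
      _ ≤ C * ‖z⁺‖ + C * ‖z⁻‖ := add_le_add (hPC _ (posPart_nonneg z)) (hPC _ (negPart_nonneg z))
      _ ≤ 2 * C * ‖z‖ := by nlinarith
  refine ⟨p.toRealLinearMap (AddMonoidHomClass.lipschitz_of_bound p _ hpC).continuous,
    fun a ha => ?_⟩
  simp [p, posPart_eq_self.mpr ha, negPart_eq_zero.mpr ha, hP0]

end NormedLattice

namespace ContinuousLinearMap

section

variable {G : Type*} [NormedAddCommGroup G] [Lattice G] [NormedSpace ℝ G] (f : G →L[ℝ] ℝ)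

/-- On the positive cone, the positive part `f⁺` of `f` in the Riesz space of functionals. -/
noncomputable def supIcc (a : G) : ℝ := sSup (f '' Set.Icc 0 a)

theorem supIcc_le {a : G} (ha : 0 ≤ a) {r : ℝ} (hr : ∀ y ∈ Set.Icc 0 a, f y ≤ r) :
    f.supIcc a ≤ r :=
  csSup_le ⟨f 0, Set.mem_image_of_mem f ⟨le_rfl, ha⟩⟩ (Set.forall_mem_image.mpr hr)

variable [IsOrderedAddMonoid G] [HasSolidNorm G]

theorem apply_le_opNorm_mul_norm_of_mem_Icc {a y : G} (hy : y ∈ Set.Icc 0 a) :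
    f y ≤ ‖f‖ * ‖a‖ := by
  have hya : ‖y‖ ≤ ‖a‖ := HasSolidNorm.solid <| by
    rw [abs_of_nonneg hy.1, abs_of_nonneg (hy.1.trans hy.2)]
    exact hy.2
  calc f y ≤ ‖f y‖ := Real.le_norm_self _
    _ ≤ ‖f‖ * ‖y‖ := f.le_opNorm y
    _ ≤ ‖f‖ * ‖a‖ := by gcongr

theorem le_supIcc {a y : G} (hy : y ∈ Set.Icc 0 a) : f y ≤ f.supIcc a :=
  le_csSup ⟨‖f‖ * ‖a‖, Set.forall_mem_image.mpr fun _ => f.apply_le_opNorm_mul_norm_of_mem_Icc⟩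
    (Set.mem_image_of_mem f hy)

theorem supIcc_add {a b : G} (ha : 0 ≤ a) (hb : 0 ≤ b) :
    f.supIcc (a + b) = f.supIcc a + f.supIcc b := by
  apply le_antisymm
  · refine f.supIcc_le (add_nonneg ha hb) fun y hy => ?_
    -- Riesz decomposition: `y = y ⊓ a + (y - y ⊓ a)` with `0 ≤ y - y ⊓ a ≤ b`
    have hya : y ⊓ a ∈ Set.Icc 0 a := ⟨le_inf hy.1 ha, inf_le_right⟩
    have hyb : y - y ⊓ a ∈ Set.Icc 0 b := by
      refine ⟨sub_nonneg.mpr inf_le_left, ?_⟩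
      rw [sub_inf, sub_self]
      exact sup_le hb (sub_le_iff_le_add'.mpr hy.2)
    calc f y = f (y ⊓ a) + f (y - y ⊓ a) := by rw [← map_add, add_sub_cancel]
      _ ≤ f.supIcc a + f.supIcc b := add_le_add (f.le_supIcc hya) (f.le_supIcc hyb)
  · rw [← le_sub_iff_add_le]
    refine f.supIcc_le ha fun y₁ hy₁ => ?_
    rw [le_sub_comm]
    refine f.supIcc_le hb fun y₂ hy₂ => ?_
    rw [le_sub_iff_add_le', ← map_add]
    exact f.le_supIcc ⟨add_nonneg hy₁.1 hy₂.1, add_le_add hy₁.2 hy₂.2⟩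

theorem exists_positive_sub_positive :
    ∃ p q : G →L[ℝ] ℝ, (∀ z, 0 ≤ z → 0 ≤ p z) ∧ (∀ z, 0 ≤ z → 0 ≤ q z) ∧ f = p - q := by
  have hnonneg : ∀ a : G, 0 ≤ a → 0 ≤ f.supIcc a := fun a ha => by
    simpa using f.le_supIcc ⟨le_rfl, ha⟩
  obtain ⟨p, hp⟩ := exists_continuousLinearMap_eq_on_nonneg (norm_nonneg f)
    (fun a b => f.supIcc_add) fun a ha => by
      rw [abs_of_nonneg (hnonneg a ha)]
      exact f.supIcc_le ha fun y => f.apply_le_opNorm_mul_norm_of_mem_Icc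
  refine ⟨p, p - f, fun z hz => hp z hz ▸ hnonneg z hz, fun z hz => ?_, by simp⟩
  rw [sub_apply, hp z hz, sub_nonneg]
  exact f.le_supIcc ⟨hz, le_rfl⟩

end

end ContinuousLinearMap

theorem MultilinearMap.eq_zero_of_forall_mem_eq_zero {R ι : Type*} [Semiring R] [Fintype ι]
    {M : ι → Type*} [∀ j, AddCommGroup (M j)] [∀ j, Module R (M j)]
    {N : Type*} [AddCommGroup N] [Module R N] (T : MultilinearMap R M N) (P : ∀ j, Set (M j))
    (hP : ∀ j (v : M j), ∃ a ∈ P j, ∃ b ∈ P j, v = a - b)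
    (hT : ∀ f, (∀ j, f j ∈ P j) → T f = 0) (f : ∀ j, M j) : T f = 0 := by
  classical
  suffices H : ∀ s : Finset ι, ∀ f, (∀ j ∉ s, f j ∈ P j) → T f = 0 from
    H Finset.univ f (by simp)
  intro s
  induction s using Finset.induction_on with
  | empty => exact fun f hf => hT f fun j => hf j (Finset.notMem_empty j)
  | insert a s _ ih =>
    intro f hf
    obtain ⟨p, hp, q, hq, hpq⟩ := hP a (f a)
    have hupdate : ∀ v ∈ P a, T (Function.update f a v) = 0 := fun v hv => ih _ fun j hj => by
      rcases eq_or_ne j a with rfl | hja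
      · simpa using hv
      · simpa [hja] using hf j (by simp [hja, hj])
    rw [← Function.update_eq_self a f, hpq, T.map_update_sub, hupdate p hp, hupdate q hq, sub_zero]

section PositiveFunctionals

variable {ι κ : Type*} [Fintype ι] [Fintype κ] {E : ι → Type*} [∀ j, NormedAddCommGroup (E j)]
  [∀ j, Lattice (E j)] [∀ j, IsOrderedAddMonoid (E j)] [∀ j, HasSolidNorm (E j)]
  [∀ j, NormedSpace ℝ (E j)]

theorem sum_mul_prod_eq_zero_of_forall_positive (c : κ → ℝ) (x : κ → ∀ j, E j)
    (h : ∀ f : ∀ j, StrongDual ℝ (E j), (∀ j z, 0 ≤ z → 0 ≤ f j z) →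
      ∑ i, c i * ∏ j, f j (x i j) = 0)
    (f : ∀ j, StrongDual ℝ (E j)) : ∑ i, c i * ∏ j, f j (x i j) = 0 := by
  classical
  let T : MultilinearMap ℝ (fun j => StrongDual ℝ (E j)) ℝ :=
    ∑ i, c i • (MultilinearMap.mkPiAlgebra ℝ ι ℝ).compLinearMap
      fun j => (ContinuousLinearMap.apply ℝ ℝ (x i j)).toLinearMap
  have hT : ∀ f, T f = ∑ i, c i * ∏ j, f j (x i j) := fun f => by simp [T]
  rw [← hT]
  refine T.eq_zero_of_forall_mem_eq_zero (fun j => {g | ∀ z, 0 ≤ z → 0 ≤ g z})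
    (fun j g => ?_) (fun f hf => (hT f).trans (h f hf)) f
  obtain ⟨p, q, hp, hq, rfl⟩ := g.exists_positive_sub_positive
  exact ⟨p, hp, q, hq, rfl⟩

end PositiveFunctionals

section ContinuousDual

variable {K : Type*} [Field K] {ι κ : Type*} [Fintype ι] [Fintype κ]
  {E : ι → Type*} [∀ j, AddCommGroup (E j)] [∀ j, Module K (E j)]

theorem sum_mul_prod_update_eq [DecidableEq ι] (c : κ → K) (x : κ → ∀ j, E j) (f : ∀ j, Module.Dual K (E j))
    (a : ι) (h : Module.Dual K (E a)) :
    ∑ i, c i * ∏ j, Function.update f a h j (x i j)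
      = h (∑ i, (c i * ∏ j ∈ Finset.univ.erase a, f j (x i j)) • x i a) := by
  simp only [map_sum, map_smul, smul_eq_mul]
  refine Finset.sum_congr rfl fun i _ => ?_
  rw [← Finset.mul_prod_erase _ _ (Finset.mem_univ a), Function.update_self,
    Finset.prod_congr rfl fun j hj => by rw [Function.update_of_ne (Finset.ne_of_mem_erase hj)]]
  ring

variable [TopologicalSpace K] [∀ j, TopologicalSpace (E j)] [∀ j, SeparatingDual K (E j)]

theorem sum_mul_prod_eq_zero_of_forall_strongDual (c : κ → K) (x : κ → ∀ j, E j)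
    (h : ∀ f : ∀ j, StrongDual K (E j), ∑ i, c i * ∏ j, f j (x i j) = 0)
    (f : ∀ j, Module.Dual K (E j)) : ∑ i, c i * ∏ j, f j (x i j) = 0 := by
  classical
  suffices H : ∀ s : Finset ι, ∀ f : ∀ j, Module.Dual K (E j),
      (∀ j ∉ s, Continuous (f j)) → ∑ i, c i * ∏ j, f j (x i j) = 0 from
    H Finset.univ f (by simp)
  intro s
  induction s using Finset.induction_on with
  | empty =>
    intro f hf
    simpa using h fun j => ⟨f j, hf j (Finset.notMem_empty j)⟩
  | insert a s _ ih =>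
    intro f hf
    have hw : ∑ i, (c i * ∏ j ∈ Finset.univ.erase a, f j (x i j)) • x i a = 0 := by
      refine SeparatingDual.eq_zero_of_forall_dual_eq_zero (R := K) fun g => ?_
      rw [← ContinuousLinearMap.coe_coe g, ← sum_mul_prod_update_eq]
      refine ih _ fun j hj => ?_
      rcases eq_or_ne j a with rfl | hja
      · simpa using g.continuous
      · simpa [hja] using hf j (by simp [hja, hj])
    rw [← Function.update_eq_self a f, sum_mul_prod_update_eq, hw, map_zero]

end ContinuousDual

theorem sum_smul_tprod_tmul_eq_zero_of_forall_dual {K : Type*} [Field K] {ι κ : Type*}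
    [Fintype ι] [Fintype κ] {M : ι → Type*} [∀ j, AddCommGroup (M j)] [∀ j, Module K (M j)]
    {N : Type*} [AddCommGroup N] [Module K N] (c : κ → K) (x : κ → ∀ j, M j) (y : κ → N)
    (h : ∀ (f : ∀ j, Module.Dual K (M j)) (g : Module.Dual K N),
      ∑ i, c i * (∏ j, f j (x i j)) * g (y i) = 0) :
    ∑ i, c i • ((⨂ₜ[K] j, x i j) ⊗ₜ[K] y i) = 0 := by
  classical
  let b := fun j => Module.Basis.ofVectorSpace K (M j)
  let d := Module.Basis.ofVectorSpace K N
  apply ((Basis.piTensorProduct b).tensorProduct d).repr.injective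
  ext ⟨p, k⟩
  simpa [Finsupp.finsetSum_apply, mul_comm, mul_left_comm] using
    h (fun j => (b j).coord (p j)) (d.coord k)

theorem tensor_eq_zero_iff_pos_forms_general {m : ℕ} {E : Fin m → Type*}
    [∀ i, NormedAddCommGroup (E i)] [∀ i, Lattice (E i)]
    [∀ i, IsOrderedAddMonoid (E i)] [∀ i, HasSolidNorm (E i)] [∀ i, NormedSpace ℝ (E i)]
    {F : Type*} [NormedAddCommGroup F] [Lattice F]
    [IsOrderedAddMonoid F] [HasSolidNorm F] [NormedSpace ℝ F]
    (n : ℕ) (lam : Fin n → ℝ) (x : Fin n → ∀ j, E j) (y : Fin n → F) :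
    (∑ i, lam i • ((⨂ₜ[ℝ] j, x i j) ⊗ₜ[ℝ] y i)) = 0 ↔
      ∀ (φ : ContinuousMultilinearMap ℝ E ℝ) (g : F →L[ℝ] ℝ),
        (∀ z : ∀ j, E j, (∀ j, 0 ≤ z j) → 0 ≤ φ z) → (∀ z : F, 0 ≤ z → 0 ≤ g z) →
        ∑ i, lam i * φ (x i) * g (y i) = 0 := by
  refine ⟨fun hu φ g _ _ => ?_, fun H => ?_⟩
  · have := congrArg (TensorProduct.lift <|
      (LinearMap.mul ℝ ℝ).compl₁₂ (PiTensorProduct.lift φ.toMultilinearMap) g.toLinearMap) hu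
    simpa [mul_assoc] using this
  have hpos : ∀ (f : ∀ j, StrongDual ℝ (E j)) (g : StrongDual ℝ F), (∀ z, 0 ≤ z → 0 ≤ g z) →
      ∑ i, lam i * (∏ j, f j (x i j)) * g (y i) = 0 := fun f g hg => by
    simpa [mul_right_comm] using sum_mul_prod_eq_zero_of_forall_positive
      (fun i => lam i * g (y i)) x (fun f hf => by
        simpa [mul_right_comm] using
          H ((ContinuousMultilinearMap.mkPiAlgebra ℝ (Fin m) ℝ).compContinuousLinearMap f) g
            (fun z hz => by simpa using Finset.prod_nonneg fun j _ => hf j _ (hz j)) hg) f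
  have hcont : ∀ (f : ∀ j, StrongDual ℝ (E j)) (g : StrongDual ℝ F),
      ∑ i, lam i * (∏ j, f j (x i j)) * g (y i) = 0 := by
    intro f g
    obtain ⟨p, q, hp, hq, rfl⟩ := g.exists_positive_sub_positive
    simp only [sub_apply, mul_sub, Finset.sum_sub_distrib, hpos f p hp, hpos f q hq, sub_zero]
  refine sum_smul_tprod_tmul_eq_zero_of_forall_dual lam x y fun f g => ?_
  have hvec : ∑ i, (lam i * ∏ j, f j (x i j)) • y i = 0 :=
    SeparatingDual.eq_zero_of_forall_dual_eq_zero (R := ℝ) fun g' => by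
      simpa [mul_right_comm] using sum_mul_prod_eq_zero_of_forall_strongDual
        (fun i => lam i * g' (y i)) x (fun f' => by simpa [mul_right_comm] using hcont f' g') f
  simpa using congrArg g hvec

/-- An element `u = ∑ᵢ λᵢ xᵢ¹ ⊗ ⋯ ⊗ xᵢ^m ⊗ yᵢ` of `E₁ ⊗ ⋯ ⊗ E_m ⊗ F` vanishes iff
`∑ᵢ λᵢ φ(xᵢ¹,…,xᵢ^m) y*(yᵢ) = 0` for every positive continuous `m`-linear form `φ` on
`E₁ × ⋯ × E_m` and every positive functional `y* ∈ (F*)⁺`. -/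
theorem tensor_eq_zero_iff_pos_forms {m : ℕ} {E : Fin m → Type*}
    [∀ i, NormedAddCommGroup (E i)] [∀ i, Lattice (E i)]
    [∀ i, IsOrderedAddMonoid (E i)] [∀ i, HasSolidNorm (E i)] [∀ i, NormedSpace ℝ (E i)]
    [∀ i, CompleteSpace (E i)]
    {F : Type*} [NormedAddCommGroup F] [Lattice F]
    [IsOrderedAddMonoid F] [HasSolidNorm F] [NormedSpace ℝ F] [CompleteSpace F]
    (n : ℕ) (lam : Fin n → ℝ) (x : Fin n → ∀ j, E j) (y : Fin n → F) :
    (∑ i, lam i • ((⨂ₜ[ℝ] j, x i j) ⊗ₜ[ℝ] y i)) = 0 ↔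
      ∀ (φ : ContinuousMultilinearMap ℝ E ℝ) (g : F →L[ℝ] ℝ),
        (∀ z : ∀ j, E j, (∀ j, 0 ≤ z j) → 0 ≤ φ z) → (∀ z : F, 0 ≤ z → 0 ≤ g z) →
        ∑ i, lam i * φ (x i) * g (y i) = 0 :=
  tensor_eq_zero_iff_pos_forms_general n lam x y
end
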